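/- Let β₀, β₁, β₂ ∈ ℚ/ℤ be rationals with continued fraction expansions β_i = [b₁, ..., b_{2n−1}, B+i] = p_{2n}(β_i)/q_{2n}(β_i) for i = 0, 1, 2, sharing the same first 2n−1 partial quotients and with last quotient B+i for some integer B ≥ 1. Then (β₀, β₁) and (β₁, β₂) are Farey intervals, q_{2n}(β₀) < q_{2n}(β₁) < q_{2n}(β₂), and the number of rationals in the open interval (β₀, β₂) whose denominator (in lowest terms) is less than 2·q_{2n}(β₂) is at most six. -/
import Mathlib


open Filter Topology Set

/-- Numerators `p_n` of the continued fraction with partial quotients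
`a_{n+1} = b n`: `p₀ = 0`, `p₁ = 1`, `p_{n+1} = a_{n+1} p_n + p_{n-1}`. -/
noncomputable def seqP (b : ℕ → ℕ) : ℕ → ℤ
  | 0 => 0
  | 1 => 1
  | n + 2 => (b (n + 1) : ℤ) * seqP b (n + 1) + seqP b n

/-- Denominators `q_n` of the continued fraction with partial quotients
`a_{n+1} = b n`: `q₀ = 1`, `q₁ = a₁`, `q_{n+1} = a_{n+1} q_n + q_{n-1}`. -/
noncomputable def seqQ (b : ℕ → ℕ) : ℕ → ℕ
  | 0 => 1
  | 1 => b 0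
  | n + 2 => b (n + 1) * seqQ b (n + 1) + seqQ b n

/-- The value `[a₁, a₂, …] = lim p_n/q_n` of the infinite continued fraction with partial
quotients `a_{n+1} = b n ≥ 1`. -/
noncomputable def cfVal (b : ℕ → ℕ) : ℝ :=
  limUnder atTop (fun n => (seqP b n : ℝ) / (seqQ b n : ℝ))

/-- A Farey interval `(p/q, p'/q')`: `p, p' ∈ ℤ`, `q, q' > 0`, with `p'q − pq' = 1`. -/
def IsFareyInterval (x y : ℝ) : Prop :=
  ∃ (p p' : ℤ) (q q' : ℕ), 0 < q ∧ 0 < q' ∧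
    x = (p : ℝ) / (q : ℝ) ∧ y = (p' : ℝ) / (q' : ℝ) ∧ p' * (q : ℤ) - p * (q' : ℤ) = 1

lemma seqP_congr : ∀ (m : ℕ) (f g : ℕ → ℕ), (∀ j, j < m → f j = g j) → seqP f m = seqP g m
  | 0, f, g, h => rfl
  | 1, f, g, h => rfl
  | (m+2), f, g, h => by
      simp only [seqP]
      rw [seqP_congr (m+1) f g (fun j hj => h j (by omega)),
        seqP_congr m f g (fun j hj => h j (by omega)), h (m+1) (by omega)]

lemma seqQ_congr : ∀ (m : ℕ) (f g : ℕ → ℕ), (∀ j, j < m → f j = g j) → seqQ f m = seqQ g m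
  | 0, f, g, h => rfl
  | 1, f, g, h => h 0 (by omega)
  | (m+2), f, g, h => by
      simp only [seqQ]
      rw [seqQ_congr (m+1) f g (fun j hj => h j (by omega)),
        seqQ_congr m f g (fun j hj => h j (by omega)), h (m+1) (by omega)]

lemma seqQ_pos : ∀ (b : ℕ → ℕ) (m : ℕ), (∀ j, j < m → 1 ≤ b j) → 0 < seqQ b m
  | b, 0, _ => Nat.one_pos
  | b, 1, h => h 0 (by omega)
  | b, (m+2), h => by
      have h1 := seqQ_pos b (m+1) (fun j hj => h j (by omega))
      have h2 := h (m+1) (by omega)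
      simp only [seqQ]
      exact Nat.add_pos_left (Nat.mul_pos h2 h1) _

lemma seq_det (b : ℕ → ℕ) : ∀ m : ℕ,
    seqP b (m+1) * (seqQ b m : ℤ) - seqP b m * (seqQ b (m+1) : ℤ) = (-1)^m
  | 0 => by simp [seqP, seqQ]
  | (m+1) => by
      have ih := seq_det b m
      show seqP b (m+2) * (seqQ b (m+1) : ℤ) - seqP b (m+1) * (seqQ b (m+2) : ℤ) = (-1)^(m+1)
      simp only [seqP, seqQ, pow_succ]
      push_cast
      linear_combination -ih

lemma rat_eq_div (r : ℚ) (N : ℤ) (D : ℕ) (hD : 0 < D)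
    (h : r.num * (D:ℤ) = N * (r.den:ℤ)) : r = (N:ℚ)/(D:ℚ) := by
  have hd2 : ((r.den:ℚ)) ≠ 0 := by
    exact_mod_cast r.den_ne_zero
  have hD' : ((D:ℚ)) ≠ 0 := Nat.cast_ne_zero.mpr hD.ne'
  have hrden : (r.num:ℚ) = r * (r.den:ℚ) := by
    have h0 : (r.num:ℚ) / (r.den:ℚ) * (r.den:ℚ) = r * (r.den:ℚ) := by
      rw [Rat.num_div_den r]
    rwa [div_mul_cancel₀ _ hd2] at h0
  rw [eq_div_iff hD']
  have hq : (r.num:ℚ) * (D:ℚ) = (N:ℚ) * (r.den:ℚ) := by exact_mod_cast h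
  have : (r * (D:ℚ)) * (r.den:ℚ) = (N:ℚ) * (r.den:ℚ) := by
    linear_combination hq - (D:ℚ) * hrden
  exact mul_right_cancel₀ hd2 this

lemma farey_decomp (p p' : ℤ) (q q' : ℕ) (hq : 0 < q) (hq' : 0 < q')
    (hdet : p' * (q:ℤ) - p * (q':ℤ) = 1) (r : ℚ)
    (h1 : (p:ℝ)/(q:ℝ) < (r:ℝ)) (h2 : (r:ℝ) < (p':ℝ)/(q':ℝ)) :
    ∃ k l : ℤ, 1 ≤ k ∧ 1 ≤ l ∧ r.num = k*p + l*p' ∧ (r.den:ℤ) = k*(q:ℤ) + l*(q':ℤ) := by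
  have hqR : (0:ℝ) < (q:ℝ) := by exact_mod_cast hq
  have hq'R : (0:ℝ) < (q':ℝ) := by exact_mod_cast hq'
  have hdR : (0:ℝ) < (r.den:ℝ) := by exact_mod_cast r.pos
  rw [Rat.cast_def] at h1 h2
  rw [div_lt_div_iff₀ hqR hdR] at h1
  rw [div_lt_div_iff₀ hdR hq'R] at h2
  have h1' : p * (r.den:ℤ) < r.num * (q:ℤ) := by exact_mod_cast h1
  have h2' : r.num * (q':ℤ) < p' * (r.den:ℤ) := by exact_mod_cast h2
  refine ⟨p' * (r.den:ℤ) - (q':ℤ) * r.num, (q:ℤ) * r.num - p * (r.den:ℤ), by linarith, by linarith,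
    ?_, ?_⟩
  · linear_combination (-r.num) * hdet
  · linear_combination (-(r.den:ℤ)) * hdet

set_option maxHeartbeats 2000000 in
/-- Let `β₀, β₁, β₂ ∈ ℚ/ℤ` be the rationals with continued fraction expansions
`β_i = [b₁, …, b_{2n−1}, B+i] = p_{2n}(β_i)/q_{2n}(β_i)` for `i = 0, 1, 2`, sharing the
same first `2n−1` partial quotients (`b_{j+1} = b j`) and with last quotient `B+i`,
`B ≥ 1`. Then `(β₀, β₁)` and `(β₁, β₂)` are Farey intervals,
`q_{2n}(β₀) < q_{2n}(β₁) < q_{2n}(β₂)`, and the number of rationals in the open interval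
`(β₀, β₂)` whose denominator in lowest terms is less than `2·q_{2n}(β₂)` is at most six. -/
theorem farey_intervals_and_rational_count
    (n : ℕ) (hn : 1 ≤ n) (b : ℕ → ℕ) (hb : ∀ j, j < 2 * n - 1 → 1 ≤ b j)
    (B : ℕ) (hB : 1 ≤ B) :
    IsFareyInterval
        ((seqP (fun j => if j = 2 * n - 1 then B else b j) (2 * n) : ℝ) /
          (seqQ (fun j => if j = 2 * n - 1 then B else b j) (2 * n) : ℝ))
        ((seqP (fun j => if j = 2 * n - 1 then B + 1 else b j) (2 * n) : ℝ) /
          (seqQ (fun j => if j = 2 * n - 1 then B + 1 else b j) (2 * n) : ℝ)) ∧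
      IsFareyInterval
        ((seqP (fun j => if j = 2 * n - 1 then B + 1 else b j) (2 * n) : ℝ) /
          (seqQ (fun j => if j = 2 * n - 1 then B + 1 else b j) (2 * n) : ℝ))
        ((seqP (fun j => if j = 2 * n - 1 then B + 2 else b j) (2 * n) : ℝ) /
          (seqQ (fun j => if j = 2 * n - 1 then B + 2 else b j) (2 * n) : ℝ)) ∧
      seqQ (fun j => if j = 2 * n - 1 then B else b j) (2 * n) <
        seqQ (fun j => if j = 2 * n - 1 then B + 1 else b j) (2 * n) ∧
      seqQ (fun j => if j = 2 * n - 1 then B + 1 else b j) (2 * n) <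
        seqQ (fun j => if j = 2 * n - 1 then B + 2 else b j) (2 * n) ∧
      ({r : ℚ |
          (seqP (fun j => if j = 2 * n - 1 then B else b j) (2 * n) : ℝ) /
            (seqQ (fun j => if j = 2 * n - 1 then B else b j) (2 * n) : ℝ) < (r : ℝ) ∧
          (r : ℝ) < (seqP (fun j => if j = 2 * n - 1 then B + 2 else b j) (2 * n) : ℝ) /
            (seqQ (fun j => if j = 2 * n - 1 then B + 2 else b j) (2 * n) : ℝ) ∧
          r.den < 2 * seqQ (fun j => if j = 2 * n - 1 then B + 2 else b j) (2 * n)}.Finite ∧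
        {r : ℚ |
          (seqP (fun j => if j = 2 * n - 1 then B else b j) (2 * n) : ℝ) /
            (seqQ (fun j => if j = 2 * n - 1 then B else b j) (2 * n) : ℝ) < (r : ℝ) ∧
          (r : ℝ) < (seqP (fun j => if j = 2 * n - 1 then B + 2 else b j) (2 * n) : ℝ) /
            (seqQ (fun j => if j = 2 * n - 1 then B + 2 else b j) (2 * n) : ℝ) ∧
          r.den < 2 * seqQ (fun j => if j = 2 * n - 1 then B + 2 else b j) (2 * n)}.ncard
          ≤ 6) := by
  obtain ⟨e, he1, he2⟩ : ∃ e, 2 * n = e + 2 ∧ 2 * n - 1 = e + 1 := ⟨2*n-2, by omega, by omega⟩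
  have heven : Even e := ⟨n - 1, by omega⟩
  have hbj : ∀ j, j < e + 1 → 1 ≤ b j := fun j hj => hb j (by omega)
  have hQ1 : 0 < seqQ b (e+1) := seqQ_pos b (e+1) hbj
  have hQ0 : 0 < seqQ b e := seqQ_pos b e (fun j hj => hb j (by omega))
  have hdet : seqP b (e+1) * (seqQ b e : ℤ) - seqP b e * (seqQ b (e+1) : ℤ) = 1 := by
    have h := seq_det b e
    rwa [heven.neg_one_pow] at h
  have keyP : ∀ A : ℕ, seqP (fun j => if j = 2 * n - 1 then A else b j) (2 * n)
      = (A : ℤ) * seqP b (e+1) + seqP b e := by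
    intro A
    have h1 : seqP (fun j => if j = e + 1 then A else b j) (e+1) = seqP b (e+1) :=
      seqP_congr (e+1) _ b (fun j hj => if_neg (by omega))
    have h0 : seqP (fun j => if j = e + 1 then A else b j) e = seqP b e :=
      seqP_congr e _ b (fun j hj => if_neg (by omega))
    simp only [he2]
    rw [he1]
    simp only [seqP, h1, h0]
    simp
  have keyQ : ∀ A : ℕ, seqQ (fun j => if j = 2 * n - 1 then A else b j) (2 * n)
      = A * seqQ b (e+1) + seqQ b e := by
    intro A
    have h1 : seqQ (fun j => if j = e + 1 then A else b j) (e+1) = seqQ b (e+1) :=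
      seqQ_congr (e+1) _ b (fun j hj => if_neg (by omega))
    have h0 : seqQ (fun j => if j = e + 1 then A else b j) e = seqQ b e :=
      seqQ_congr e _ b (fun j hj => if_neg (by omega))
    simp only [he2]
    rw [he1]
    simp only [seqQ, h1, h0]
    simp
  simp only [keyP, keyQ]
  set Z1 := seqP b (e+1) with hZ1def
  set Z0 := seqP b e with hZ0def
  set W1 := seqQ b (e+1) with hW1def
  set W0 := seqQ b e with hW0def
  set pA : ℤ := (B:ℤ) * Z1 + Z0 with hpA
  set pB : ℤ := ((B+1:ℕ):ℤ) * Z1 + Z0 with hpB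
  set pC : ℤ := ((B+2:ℕ):ℤ) * Z1 + Z0 with hpC
  set qA : ℕ := B * W1 + W0 with hqA
  set qB : ℕ := (B+1) * W1 + W0 with hqB
  set qC : ℕ := (B+2) * W1 + W0 with hqC
  have hqApos : 0 < qA := by rw [hqA]; exact Nat.lt_of_lt_of_le hQ0 (Nat.le_add_left _ _)
  have hqBpos : 0 < qB := by rw [hqB]; exact Nat.lt_of_lt_of_le hQ0 (Nat.le_add_left _ _)
  have hqCpos : 0 < qC := by rw [hqC]; exact Nat.lt_of_lt_of_le hQ0 (Nat.le_add_left _ _)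
  have det01 : pB * (qA:ℤ) - pA * (qB:ℤ) = 1 := by
    rw [hpA, hpB, hqA, hqB]; push_cast; linear_combination hdet
  have det12 : pC * (qB:ℤ) - pB * (qC:ℤ) = 1 := by
    rw [hpB, hpC, hqB, hqC]; push_cast; linear_combination hdet
  have hW1z : (1:ℤ) ≤ (W1:ℤ) := by exact_mod_cast hQ1
  have hW0z : (1:ℤ) ≤ (W0:ℤ) := by exact_mod_cast hQ0
  have hBz : (1:ℤ) ≤ (B:ℤ) := by exact_mod_cast hB
  have hBQ : (0:ℤ) ≤ ((B:ℤ)-1)*(W1:ℤ) := mul_nonneg (by linarith) (by linarith)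
  -- the six candidate rationals
  set T : Set ℚ := {((pA+pB:ℤ):ℚ)/((qA+qB:ℕ):ℚ), ((2*pA+pB:ℤ):ℚ)/((2*qA+qB:ℕ):ℚ),
    ((3*pA+pB:ℤ):ℚ)/((3*qA+qB:ℕ):ℚ), ((pA+2*pB:ℤ):ℚ)/((qA+2*qB:ℕ):ℚ),
    ((pB:ℤ):ℚ)/((qB:ℕ):ℚ), ((pB+pC:ℤ):ℚ)/((qB+qC:ℕ):ℚ)} with hT
  have hTfin : T.Finite := by
    rw [hT]
    exact (((((Set.finite_singleton _).insert _).insert _).insert _).insert _).insert _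
  have h6 : T.ncard ≤ 6 := by
    rw [hT]
    refine (Set.ncard_insert_le _ _).trans (Nat.add_le_add_right ?_ 1)
    refine (Set.ncard_insert_le _ _).trans (Nat.add_le_add_right ?_ 1)
    refine (Set.ncard_insert_le _ _).trans (Nat.add_le_add_right ?_ 1)
    refine (Set.ncard_insert_le _ _).trans (Nat.add_le_add_right ?_ 1)
    refine (Set.ncard_insert_le _ _).trans (Nat.add_le_add_right ?_ 1)
    simp [Set.ncard_singleton]
  have hsub : {r : ℚ | ((pA:ℤ):ℝ)/((qA:ℕ):ℝ) < (r:ℝ) ∧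
      (r:ℝ) < ((pC:ℤ):ℝ)/((qC:ℕ):ℝ) ∧ r.den < 2 * qC} ⊆ T := by
    intro r hr
    obtain ⟨h0, h2, hd⟩ := hr
    have hdz : (r.den : ℤ) < 2*(qC:ℤ) := by exact_mod_cast hd
    rw [hT]
    simp only [Set.mem_insert_iff, Set.mem_singleton_iff]
    rcases lt_trichotomy (r:ℝ) (((pB:ℤ):ℝ)/((qB:ℕ):ℝ)) with hlt | heq | hgt
    · obtain ⟨k, l, hk, hl, hnum, hden⟩ := farey_decomp pA pB qA qB hqApos hqBpos det01 r h0 hlt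
      rw [hden] at hdz
      rw [hqA, hqB] at hdz
      rw [hqC] at hdz
      push_cast at hdz
      have hl2 : l ≤ 2 := by
        by_contra hc; push_neg at hc
        nlinarith [mul_nonneg (by linarith : (0:ℤ) ≤ k-1)
            (show (0:ℤ) ≤ (B:ℤ)*(W1:ℤ)+(W0:ℤ) by positivity),
          mul_nonneg (by linarith : (0:ℤ) ≤ l-3)
            (show (0:ℤ) ≤ ((B:ℤ)+1)*(W1:ℤ)+(W0:ℤ) by positivity), hBQ]
      have hk3 : k ≤ 3 := by
        by_contra hc; push_neg at hc
        nlinarith [mul_nonneg (by linarith : (0:ℤ) ≤ k-4)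
            (show (0:ℤ) ≤ (B:ℤ)*(W1:ℤ)+(W0:ℤ) by positivity),
          mul_nonneg (by linarith : (0:ℤ) ≤ l-1)
            (show (0:ℤ) ≤ ((B:ℤ)+1)*(W1:ℤ)+(W0:ℤ) by positivity), hBQ]
      have hnot : ¬(2 ≤ k ∧ 2 ≤ l) := by
        rintro ⟨h2k, h2l⟩
        nlinarith [mul_nonneg (by linarith : (0:ℤ) ≤ k-2)
            (show (0:ℤ) ≤ (B:ℤ)*(W1:ℤ)+(W0:ℤ) by positivity),
          mul_nonneg (by linarith : (0:ℤ) ≤ l-2)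
            (show (0:ℤ) ≤ ((B:ℤ)+1)*(W1:ℤ)+(W0:ℤ) by positivity), hBQ]
      have hcases : (k=1∧l=1)∨(k=2∧l=1)∨(k=3∧l=1)∨(k=1∧l=2) := by omega
      rcases hcases with ⟨rfl, rfl⟩ | ⟨rfl, rfl⟩ | ⟨rfl, rfl⟩ | ⟨rfl, rfl⟩
      · exact Or.inl (rat_eq_div r (pA+pB) (qA+qB) (by omega)
          (by rw [hnum, hden]; push_cast; ring))
      · refine Or.inr (Or.inl (rat_eq_div r (2*pA+pB) (2*qA+qB) (by omega)
          (by rw [hnum, hden]; push_cast; ring)))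
      · refine Or.inr (Or.inr (Or.inl (rat_eq_div r (3*pA+pB) (3*qA+qB) (by omega)
          (by rw [hnum, hden]; push_cast; ring))))
      · refine Or.inr (Or.inr (Or.inr (Or.inl (rat_eq_div r (pA+2*pB) (qA+2*qB) (by omega)
          (by rw [hnum, hden]; push_cast; ring)))))
    · refine Or.inr (Or.inr (Or.inr (Or.inr (Or.inl ?_))))
      have hq : r.num * (qB:ℤ) = pB * (r.den:ℤ) := by
        rw [Rat.cast_def] at heq
        have hdR : ((r.den:ℝ)) ≠ 0 := by
          have : (0:ℝ) < (r.den:ℝ) := by exact_mod_cast r.pos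
          linarith
        have hqR : ((qB:ℝ)) ≠ 0 := by
          have : (0:ℝ) < (qB:ℝ) := by exact_mod_cast hqBpos
          linarith
        rw [div_eq_div_iff hdR hqR] at heq
        exact_mod_cast heq
      exact rat_eq_div r pB qB hqBpos hq
    · obtain ⟨k, l, hk, hl, hnum, hden⟩ := farey_decomp pB pC qB qC hqBpos hqCpos det12 r hgt h2
      rw [hden] at hdz
      rw [hqB] at hdz
      rw [hqC] at hdz
      push_cast at hdz
      have hk1 : k ≤ 1 := by
        by_contra hc; push_neg at hc
        nlinarith [mul_nonneg (by linarith : (0:ℤ) ≤ k-2)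
            (show (0:ℤ) ≤ ((B:ℤ)+1)*(W1:ℤ)+(W0:ℤ) by positivity),
          mul_nonneg (by linarith : (0:ℤ) ≤ l-1)
            (show (0:ℤ) ≤ ((B:ℤ)+2)*(W1:ℤ)+(W0:ℤ) by positivity)]
      have hl1 : l ≤ 1 := by
        by_contra hc; push_neg at hc
        nlinarith [mul_nonneg (by linarith : (0:ℤ) ≤ k-1)
            (show (0:ℤ) ≤ ((B:ℤ)+1)*(W1:ℤ)+(W0:ℤ) by positivity),
          mul_nonneg (by linarith : (0:ℤ) ≤ l-2)
            (show (0:ℤ) ≤ ((B:ℤ)+2)*(W1:ℤ)+(W0:ℤ) by positivity)]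
      have hk1' : k = 1 := le_antisymm hk1 hk
      have hl1' : l = 1 := le_antisymm hl1 hl
      subst hk1'; subst hl1'
      refine Or.inr (Or.inr (Or.inr (Or.inr (Or.inr (rat_eq_div r (pB+pC) (qB+qC) (by omega)
        (by rw [hnum, hden]; push_cast; ring))))))
  refine ⟨⟨pA, pB, qA, qB, hqApos, hqBpos, rfl, rfl, det01⟩,
    ⟨pB, pC, qB, qC, hqBpos, hqCpos, rfl, rfl, det12⟩,
    ?_, ?_, hTfin.subset hsub, (Set.ncard_le_ncard hsub hTfin).trans h6⟩
  · rw [hqA, hqB]; nlinarith [hQ1]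
  · rw [hqB, hqC]; nlinarith [hQ1]
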